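/- Let μ be a non-degenerate probability measure on ℝ with compact support, let D = sSup(supp μ) − sInf(supp μ) be the diameter of its support, let p ∈ (0,1), and let G be the inverse distribution function of μ. Then: (a) for every (1−p,p) Bernoulli decomposition ρ of μ, the essential supremum of y₂ − y₁ under ρ is at most D, i.e. ρ({ (y₁,y₂) : y₂ − y₁ > D }) = 0; and (b) for the colliding Pac-Men decomposition, sup_{t∈(0,1)} δ⁻_p(t) = D, where δ⁻_p(t) = G(1−pt) − G((1−p)t). -/

import Mathlib

open MeasureTheory Set

/-- The inverse distribution function `G(t) = inf {u : μ((-∞,u]) ≥ t}`. -/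
noncomputable def invCDF (μ : Measure ℝ) (t : ℝ) : ℝ :=
  sInf {u : ℝ | t ≤ (μ (Iic u)).toReal}

/-- The topological support of a measure on `ℝ`: points all of whose neighbourhoods
have positive measure. -/
def msupport (μ : Measure ℝ) : Set ℝ := {x : ℝ | ∀ U ∈ nhds x, μ U ≠ 0}

/-!
With `a = inf supp μ` and `b = sup supp μ`, `μ` gives no mass to `(-∞, a)` or `(b, ∞)`. Each
marginal of a Bernoulli decomposition is dominated by a positive multiple of `μ`, so `Y₁ ≥ a` and
`Y₂ ≤ b` almost surely, which is (a). For (b), `a ≤ G ≤ b` on `(0, 1)` bounds `δ⁻_p` by `b - a`;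
as `a` and `b` lie in the support, `G(s) → a` as `s → 0⁺` and `G(s) → b` as `s → 1⁻`, so
`δ⁻_p(t) → b - a` as `t → 0⁺`.
-/

open Filter Topology ProbabilityTheory
open scoped ENNReal

lemma msupport_eq_support (μ : Measure ℝ) : msupport μ = μ.support := by
  ext x
  simp [msupport, Measure.mem_support_iff_forall, pos_iff_ne_zero]

section Support

variable {μ : Measure ℝ}

lemma measure_compl_msupport : μ (msupport μ)ᶜ = 0 :=
  msupport_eq_support μ ▸ Measure.measure_compl_support

lemma measure_Iio_sInf_msupport (h : BddBelow (msupport μ)) :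
    μ (Iio (sInf (msupport μ))) = 0 :=
  measure_mono_null (fun _ hx hxS => (csInf_le h hxS).not_gt hx) measure_compl_msupport

lemma measure_Ioi_sSup_msupport (h : BddAbove (msupport μ)) :
    μ (Ioi (sSup (msupport μ))) = 0 :=
  measure_mono_null (fun _ hx hxS => (le_csSup h hxS).not_gt hx) measure_compl_msupport

lemma measure_Iic_pos_of_mem_msupport {a c : ℝ} (ha : a ∈ msupport μ) (hac : a < c) :
    0 < μ (Iic c) :=
  pos_iff_ne_zero.2 (ha _ (Iic_mem_nhds hac))

lemma measure_Ioi_pos_of_mem_msupport {b c : ℝ} (hb : b ∈ msupport μ) (hcb : c < b) :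
    0 < μ (Ioi c) :=
  pos_iff_ne_zero.2 (hb _ (Ioi_mem_nhds hcb))

end Support

def IsBernoulliDecomposition (p : ℝ) (ρ : Measure (ℝ × ℝ)) (μ : Measure ℝ) : Prop :=
  ENNReal.ofReal (1 - p) • ρ.map Prod.fst + ENNReal.ofReal p • ρ.map Prod.snd = μ

lemma measure_eq_zero_of_smul_add_smul_eq {α : Type*} [MeasurableSpace α] {ν₁ ν₂ μ : Measure α}
    {c₁ c₂ : ℝ≥0∞} (h : c₁ • ν₁ + c₂ • ν₂ = μ) (hc₁ : c₁ ≠ 0) {s : Set α} (hs : μ s = 0) :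
    ν₁ s = 0 := by
  subst h
  simp only [Measure.add_apply, Measure.smul_apply, smul_eq_mul, add_eq_zero, mul_eq_zero] at hs
  exact hs.1.resolve_left hc₁

lemma IsBernoulliDecomposition.measure_lt_sub_eq_zero {p a b : ℝ} {ρ : Measure (ℝ × ℝ)}
    {μ : Measure ℝ} (hρ : IsBernoulliDecomposition p ρ μ) (hp : p ∈ Ioo 0 1)
    (ha : μ (Iio a) = 0) (hb : μ (Ioi b) = 0) :
    ρ {q : ℝ × ℝ | b - a < q.2 - q.1} = 0 := by
  have hfst : ρ (Prod.fst ⁻¹' Iio a) = 0 := by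
    rw [← Measure.map_apply measurable_fst measurableSet_Iio]
    exact measure_eq_zero_of_smul_add_smul_eq hρ (by simpa using hp.2) ha
  have hsnd : ρ (Prod.snd ⁻¹' Ioi b) = 0 := by
    rw [← Measure.map_apply measurable_snd measurableSet_Ioi]
    exact measure_eq_zero_of_smul_add_smul_eq ((add_comm _ _).trans hρ) (by simpa using hp.1) hb
  refine measure_mono_null (fun q hq => ?_) (measure_union_null hfst hsnd)
  by_contra h
  simp only [mem_ofPred_eq, mem_union, mem_preimage, mem_Iio, mem_Ioi, not_or, not_lt] at hq h
  linarith

section InvCDF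

variable {μ : Measure ℝ} {a b c t : ℝ}

lemma bddBelow_setOf_le_cdf (ht : 0 < t) : BddBelow {u | t ≤ cdf μ u} := by
  obtain ⟨c, hc⟩ := eventually_atBot.1 ((tendsto_order.1 (tendsto_cdf_atBot μ)).2 t ht)
  exact ⟨c, fun u hu => le_of_not_ge fun huc => (hc u huc).not_ge hu⟩

lemma nonempty_setOf_le_cdf (ht : t < 1) : {u | t ≤ cdf μ u}.Nonempty :=
  (((tendsto_order.1 (tendsto_cdf_atTop μ)).1 t ht).exists).imp fun _ hu => hu.le

variable [IsProbabilityMeasure μ]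

lemma invCDF_eq_sInf_cdf (t : ℝ) : invCDF μ t = sInf {u | t ≤ cdf μ u} := by
  simp only [invCDF, cdf_eq_real, measureReal_def]

lemma invCDF_le_of_le_cdf (ht : 0 < t) (h : t ≤ cdf μ c) : invCDF μ t ≤ c := by
  rw [invCDF_eq_sInf_cdf]
  exact csInf_le (bddBelow_setOf_le_cdf ht) h

lemma le_invCDF_of_cdf_lt (ht : t < 1) (h : cdf μ c < t) : c ≤ invCDF μ t := by
  rw [invCDF_eq_sInf_cdf]
  exact le_csInf (nonempty_setOf_le_cdf ht) fun u hu =>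
    le_of_not_ge fun huc => (h.trans_le hu).not_ge (monotone_cdf μ huc)

lemma le_invCDF_of_measure_Iio_eq_zero (ha : μ (Iio a) = 0) (ht : t ∈ Ioo 0 1) :
    a ≤ invCDF μ t := by
  refine le_of_forall_lt_imp_le_of_dense fun c hca => le_invCDF_of_cdf_lt ht.2 ?_
  rw [cdf_eq_real, measureReal_def, measure_mono_null (Iic_subset_Iio.2 hca) ha]
  exact ht.1

lemma invCDF_le_of_measure_Ioi_eq_zero (hb : μ (Ioi b) = 0) (ht : t ∈ Ioo 0 1) :
    invCDF μ t ≤ b := by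
  refine invCDF_le_of_le_cdf ht.1 ?_
  rw [cdf_eq_real, measureReal_def, ← compl_Ioi, prob_compl_eq_one_sub measurableSet_Ioi, hb]
  simpa using ht.2.le

lemma tendsto_invCDF_nhdsGT_zero (ha : a ∈ msupport μ) (ha₀ : μ (Iio a) = 0) :
    Tendsto (invCDF μ) (𝓝[>] 0) (𝓝 a) := by
  refine tendsto_order.2 ⟨fun a' ha' => ?_, fun a' ha' => ?_⟩
  · filter_upwards [Ioo_mem_nhdsGT one_pos] with t ht
    exact ha'.trans_le (le_invCDF_of_measure_Iio_eq_zero ha₀ ht)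
  · obtain ⟨c, hac, hca'⟩ := exists_between ha'
    have hc : 0 < cdf μ c := by
      rw [cdf_eq_real, measureReal_def]
      exact ENNReal.toReal_pos (measure_Iic_pos_of_mem_msupport ha hac).ne' (measure_ne_top _ _)
    filter_upwards [Ioo_mem_nhdsGT hc] with t ht
    exact (invCDF_le_of_le_cdf ht.1 ht.2.le).trans_lt hca'

lemma tendsto_invCDF_nhdsLT_one (hb : b ∈ msupport μ) (hb₀ : μ (Ioi b) = 0) :
    Tendsto (invCDF μ) (𝓝[<] 1) (𝓝 b) := by
  refine tendsto_order.2 ⟨fun b' hb' => ?_, fun b' hb' => ?_⟩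
  · obtain ⟨c, hb'c, hcb⟩ := exists_between hb'
    have hc : cdf μ c < 1 := by
      rw [cdf_eq_real, measureReal_def, ← compl_Ioi, prob_compl_eq_one_sub measurableSet_Ioi]
      refine ENNReal.toReal_lt_of_lt_ofReal ?_
      simpa using ENNReal.sub_lt_self ENNReal.one_ne_top one_ne_zero
        (measure_Ioi_pos_of_mem_msupport hb hcb).ne'
    filter_upwards [Ioo_mem_nhdsLT hc] with t ht
    exact hb'c.trans_le (le_invCDF_of_cdf_lt ht.2 ht.1)
  · filter_upwards [Ioo_mem_nhdsLT one_pos] with t ht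
    exact (invCDF_le_of_measure_Ioi_eq_zero hb₀ ht).trans_lt hb'

end InvCDF

lemma iSup_invCDF_sub_invCDF_eq {μ : Measure ℝ} [IsProbabilityMeasure μ] {p a b : ℝ}
    (hp : p ∈ Ioo 0 1) (ha : a ∈ msupport μ) (ha₀ : μ (Iio a) = 0) (hb : b ∈ msupport μ)
    (hb₀ : μ (Ioi b) = 0) :
    ⨆ t : Ioo (0:ℝ) 1, (invCDF μ (1 - p * t.1) - invCDF μ ((1 - p) * t.1)) = b - a := by
  have hargs : ∀ t ∈ Ioo (0:ℝ) 1, 1 - p * t ∈ Ioo 0 1 ∧ (1 - p) * t ∈ Ioo 0 1 := by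
    rintro t ⟨ht₀, ht₁⟩
    obtain ⟨hp₀, hp₁⟩ := hp
    refine ⟨⟨?_, ?_⟩, ?_, ?_⟩ <;> nlinarith
  have hle (t : Ioo (0:ℝ) 1) :
      invCDF μ (1 - p * t.1) - invCDF μ ((1 - p) * t.1) ≤ b - a :=
    sub_le_sub (invCDF_le_of_measure_Ioi_eq_zero hb₀ (hargs t t.2).1)
      (le_invCDF_of_measure_Iio_eq_zero ha₀ (hargs t t.2).2)
  have hunit : ∀ᶠ t in 𝓝[>] (0:ℝ), t ∈ Ioo 0 1 := Ioo_mem_nhdsGT one_pos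
  have hright : Tendsto (fun t => (1 - p) * t) (𝓝[>] 0) (𝓝[>] 0) := by
    refine tendsto_nhdsWithin_iff.2 ⟨?_, hunit.mono fun t ht => (hargs t ht).2.1⟩
    exact ((continuous_const.mul continuous_id).tendsto' 0 0 (by simp)).mono_left
      nhdsWithin_le_nhds
  have hleft : Tendsto (fun t => 1 - p * t) (𝓝[>] 0) (𝓝[<] 1) := by
    refine tendsto_nhdsWithin_iff.2 ⟨?_, hunit.mono fun t ht => (hargs t ht).1.2⟩
    exact ((continuous_const.sub (continuous_const.mul continuous_id)).tendsto' 0 1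
      (by simp)).mono_left nhdsWithin_le_nhds
  have : Nonempty (Ioo (0:ℝ) 1) := nonempty_Ioo_subtype one_pos
  refine le_antisymm (ciSup_le hle) (le_of_tendsto
    (((tendsto_invCDF_nhdsLT_one hb hb₀).comp hleft).sub
      ((tendsto_invCDF_nhdsGT_zero ha ha₀).comp hright)) ?_)
  filter_upwards [hunit] with t ht
  exact le_ciSup ⟨b - a, forall_mem_range.2 hle⟩ (⟨t, ht⟩ : Ioo (0:ℝ) 1)

theorem colliding_pacmen_maximizes_essSup_general (μ : Measure ℝ) [IsProbabilityMeasure μ]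
    (hcompact : IsCompact (msupport μ))
    (p : ℝ) (hp : p ∈ Ioo (0:ℝ) 1) :
    (∀ ρ : Measure (ℝ × ℝ), IsProbabilityMeasure ρ →
      (ENNReal.ofReal (1 - p) • ρ.map Prod.fst +
          ENNReal.ofReal p • ρ.map Prod.snd = μ) →
      ρ {q : ℝ × ℝ | sSup (msupport μ) - sInf (msupport μ) < q.2 - q.1} = 0) ∧
    (⨆ t : Ioo (0:ℝ) 1, (invCDF μ (1 - p * t.1) - invCDF μ ((1 - p) * t.1)))
      = sSup (msupport μ) - sInf (msupport μ) := by
  have hne : (msupport μ).Nonempty :=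
    msupport_eq_support μ ▸ Measure.nonempty_support (IsProbabilityMeasure.ne_zero μ)
  have hbelow := measure_Iio_sInf_msupport hcompact.bddBelow
  have habove := measure_Ioi_sSup_msupport hcompact.bddAbove
  exact ⟨fun ρ _ hρ => IsBernoulliDecomposition.measure_lt_sub_eq_zero hρ hp hbelow habove,
    iSup_invCDF_sub_invCDF_eq hp (hcompact.sInf_mem hne) hbelow (hcompact.sSup_mem hne) habove⟩

/-- For a non-degenerate compactly supported `μ` with support diameter
`D = sSup(supp μ) - sInf(supp μ)`:
(a) every `(1-p,p)` Bernoulli decomposition `ρ` of `μ` has `Y₂ - Y₁ ≤ D` almost surely;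
(b) the colliding Pac-Men decomposition achieves `sup_{t∈(0,1)} δ⁻_p(t) = D`. -/
theorem colliding_pacmen_maximizes_essSup (μ : Measure ℝ) [IsProbabilityMeasure μ]
    (hnd : ∀ x : ℝ, μ ≠ Measure.dirac x) (hcompact : IsCompact (msupport μ))
    (p : ℝ) (hp : p ∈ Ioo (0:ℝ) 1) :
    (∀ ρ : Measure (ℝ × ℝ), IsProbabilityMeasure ρ →
      (ENNReal.ofReal (1 - p) • ρ.map Prod.fst +
          ENNReal.ofReal p • ρ.map Prod.snd = μ) →
      ρ {q : ℝ × ℝ | sSup (msupport μ) - sInf (msupport μ) < q.2 - q.1} = 0) ∧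
    (⨆ t : Ioo (0:ℝ) 1, (invCDF μ (1 - p * t.1) - invCDF μ ((1 - p) * t.1)))
      = sSup (msupport μ) - sInf (msupport μ) :=
  colliding_pacmen_maximizes_essSup_general μ hcompact p hp
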